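/- Let |ψ₀⟩ and |ψ₁⟩ be pure states on registers (X,Y) such that the fidelity of their reduced states on X satisfies F(Tr_Y|ψ₀⟩⟨ψ₀|, Tr_Y|ψ₁⟩⟨ψ₁|) = ε. Then there exists a projective measurement {Π₀, Π₁, Π_⊥ = I − Π₀ − Π₁} on register X such that for each b ∈ {0,1}, ‖(Π_b ⊗ I_Y)|ψ_b⟩‖² ≥ 1 − √(2ε). -/

import Mathlib

open Matrix
open scoped ComplexOrder Kronecker
noncomputable section

/-- Square root of a matrix: the PSD square root if the matrix is PSD, else 0. -/
noncomputable def matSqrt {n : Type*} [Fintype n] [DecidableEq n]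
    (A : Matrix n n ℂ) : Matrix n n ℂ :=
  open scoped Classical in
  if h : A.PosSemidef then
    h.1.eigenvectorUnitary.1 * diagonal ((↑) ∘ (√·) ∘ h.1.eigenvalues) *
      (star h.1.eigenvectorUnitary : Matrix n n ℂ)
  else 0

/-- Trace norm ‖A‖₁ = Tr √(AᴴA). -/
noncomputable def traceNorm {n : Type*} [Fintype n] [DecidableEq n]
    (A : Matrix n n ℂ) : ℝ :=
  (Matrix.trace (matSqrt (Aᴴ * A))).re

/-- Trace distance TD(ρ,σ) = (1/2)‖ρ−σ‖₁. -/
noncomputable def TD {n : Type*} [Fintype n] [DecidableEq n]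
    (ρ σ : Matrix n n ℂ) : ℝ :=
  traceNorm (ρ - σ) / 2

/-- Uhlmann fidelity F(ρ,σ) = (Tr √(√σ ρ √σ))². -/
noncomputable def fidelity {n : Type*} [Fintype n] [DecidableEq n]
    (ρ σ : Matrix n n ℂ) : ℝ :=
  ((Matrix.trace (matSqrt (matSqrt σ * ρ * matSqrt σ))).re) ^ 2

/-- ρ is a density matrix: positive semidefinite with unit trace. -/
def IsDensity {n : Type*} [Fintype n] [DecidableEq n]
    (ρ : Matrix n n ℂ) : Prop :=
  ρ.PosSemidef ∧ ρ.trace = 1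

/-- The reduced state on X of a pure state on X ⊗ Y (Y traced out). -/
noncomputable def redX {X Y : Type*} [Fintype X] [Fintype Y]
    (ψ : X × Y → ℂ) : Matrix X X ℂ :=
  Matrix.of fun x x' => ∑ y, ψ (x, y) * (starRingEnd ℂ) (ψ (x', y))

/-!
The measurement is Helstrom's. For the reduced states `ρ₀, ρ₁` put `Δ = ρ₀ - ρ₁`; then `Π₀` and
`Π₁` are the spectral projections of `Δ` onto its positive and negative eigenvalues. Since
`tr Δ = 0`, the positive and the negative eigenvalues of `Δ` both sum to `½ ‖Δ‖₁` in absolute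
value, so `tr (Π₀ ρ₀) ≥ tr (Π₀ Δ) = ½ ‖Δ‖₁` and likewise `tr (Π₁ ρ₁) ≥ -tr (Π₁ Δ) = ½ ‖Δ‖₁`.
The Fuchs–van de Graaf bound `½ ‖Δ‖₁ ≥ 1 - √F` follows from the
Powers–Størmer inequality `‖√ρ₀ - √ρ₁‖₂² ≤ ‖ρ₀ - ρ₁‖₁`, whose left side is `2 - 2 Re tr (√ρ₀ √ρ₁)`,
together with `|tr (√ρ₀ √ρ₁)| ≤ ‖√ρ₀ √ρ₁‖₁ = √F`. Finally `‖(Π ⊗ I) ψ‖² = tr (Π Tr_Y |ψ⟩⟨ψ|)`.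
-/

open Unitary

namespace Matrix

section Conjugation

variable {m n : Type*} [Fintype m]

lemma norm_sq_apply_le_re_conjTranspose_mul_self (N : Matrix m n ℂ) (i : m) (j : n) :
    ‖N i j‖ ^ 2 ≤ ((Nᴴ * N) j j).re := by
  have hsum : ((Nᴴ * N) j j).re = ∑ k, ‖N k j‖ ^ 2 := by
    simp [Matrix.mul_apply, Complex.mul_re, Complex.sq_norm, Complex.normSq_apply]
  rw [hsum]
  exact Finset.single_le_sum (f := fun k => ‖N k j‖ ^ 2) (fun k _ => by positivity)
    (Finset.mem_univ i)

variable [Fintype n] [DecidableEq n] (U : unitaryGroup n ℂ)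

lemma conj_unitary_conjTranspose_mul_self (M : Matrix n n ℂ) :
    (star (U : Matrix n n ℂ) * M * (U : Matrix n n ℂ))ᴴ * (star (U : Matrix n n ℂ) * M * U)
      = star (U : Matrix n n ℂ) * (Mᴴ * M) * U := by
  simp only [star_eq_conjTranspose, conjTranspose_mul, conjTranspose_conjTranspose,
    Matrix.mul_assoc]
  rw [← Matrix.mul_assoc (U : Matrix n n ℂ), ← star_eq_conjTranspose, mul_star_self_of_mem U.2,
    Matrix.one_mul]

lemma trace_conjStarAlgAut_diagonal_mul (d : n → ℂ) (M : Matrix n n ℂ) :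
    trace (conjStarAlgAut ℂ _ U (diagonal d) * M)
      = ∑ i, d i * (star (U : Matrix n n ℂ) * M * U) i i := by
  rw [conjStarAlgAut_apply, Matrix.mul_assoc, trace_mul_comm, ← Matrix.mul_assoc]
  simp [trace, mul_diagonal, mul_comm]

lemma trace_eq_sum_conj_unitary_apply_self (M : Matrix n n ℂ) :
    trace M = ∑ i, (star (U : Matrix n n ℂ) * M * U) i i := by
  simpa using trace_conjStarAlgAut_diagonal_mul U 1 M

end Conjugation

namespace IsHermitian

variable {n : Type*} [Fintype n] [DecidableEq n] {A : Matrix n n ℂ} (hA : A.IsHermitian)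

local notation "U" => (hA.eigenvectorUnitary : Matrix n n ℂ)

lemma cfc_mul_cfc (f g : ℝ → ℝ) : hA.cfc f * hA.cfc g = hA.cfc (f * g) := by
  simp only [IsHermitian.cfc, ← map_mul, diagonal_mul_diagonal]
  congr; ext i; simp

lemma isHermitian_cfc (f : ℝ → ℝ) : (hA.cfc f).IsHermitian := by
  rw [IsHermitian, ← star_eq_conjTranspose, IsHermitian.cfc, ← map_star, star_eq_conjTranspose,
    diagonal_conjTranspose]
  congr; ext i; simp

lemma cfc_congr {f g : ℝ → ℝ} (h : ∀ i, f (hA.eigenvalues i) = g (hA.eigenvalues i)) :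
    hA.cfc f = hA.cfc g := by
  simp only [IsHermitian.cfc, Function.comp_def, h]

lemma cfc_id : hA.cfc id = A := hA.spectral_theorem.symm

lemma cfc_one : hA.cfc 1 = 1 := by
  simp [IsHermitian.cfc, Function.comp_def]

lemma trace_cfc_mul (f : ℝ → ℝ) (M : Matrix n n ℂ) :
    trace (hA.cfc f * M) = ∑ i, f (hA.eigenvalues i) * (star U * M * U) i i :=
  trace_conjStarAlgAut_diagonal_mul _ _ M

lemma star_eigenvectorUnitary_mul_mul_self_apply (i : n) :
    (star U * A * U) i i = hA.eigenvalues i := by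
  have := hA.conjStarAlgAut_star_eigenvectorUnitary
  rw [conjStarAlgAut_star_apply] at this
  simp [this]

lemma trace_cfc_mul_self (f : ℝ → ℝ) :
    trace (hA.cfc f * A) = ∑ i, f (hA.eigenvalues i) * hA.eigenvalues i := by
  simp [trace_cfc_mul, star_eigenvectorUnitary_mul_mul_self_apply]

lemma trace_cfc (f : ℝ → ℝ) : trace (hA.cfc f) = ∑ i, f (hA.eigenvalues i) := by
  simpa using hA.trace_cfc_mul f 1

lemma posSemidef_cfc {f : ℝ → ℝ} (hf : ∀ i, 0 ≤ f (hA.eigenvalues i)) :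
    (hA.cfc f).PosSemidef := by
  rw [IsHermitian.cfc, conjStarAlgAut_apply, star_eq_conjTranspose]
  exact (posSemidef_diagonal_iff.2 fun i => by simpa using hf i).mul_mul_conjTranspose_same _

lemma re_trace_cfc_mul_nonneg {f : ℝ → ℝ} (hf : ∀ t, 0 ≤ f t) {M : Matrix n n ℂ}
    (hM : M.PosSemidef) : 0 ≤ (trace (hA.cfc f * M)).re := by
  rw [hA.trace_cfc_mul, Complex.re_sum]
  refine Finset.sum_nonneg fun i _ => ?_
  rw [Complex.re_ofReal_mul]
  exact mul_nonneg (hf _) (Complex.nonneg_iff.1 (hM.conjTranspose_mul_mul_same U).diag_nonneg).1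

lemma cfc_indicator_mul_self (s : Set ℝ) :
    hA.cfc (s.indicator 1) * hA.cfc (s.indicator 1) = hA.cfc (s.indicator 1) := by
  rw [cfc_mul_cfc, ← Set.inter_indicator_one, Set.inter_self]

lemma cfc_indicator_mul_cfc_indicator {s t : Set ℝ} (hst : Disjoint s t) :
    hA.cfc (s.indicator 1) * hA.cfc (t.indicator 1) = 0 := by
  rw [cfc_mul_cfc, ← Set.inter_indicator_one, hst.inter_eq, Set.indicator_empty]
  simp [IsHermitian.cfc, Function.comp_def]

lemma re_trace_mul_le_sum_abs_eigenvalues {S : Matrix n n ℂ} (hS : Sᴴ * S = 1) :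
    (trace (A * S)).re ≤ ∑ i, |hA.eigenvalues i| := by
  set N : Matrix n n ℂ := star U * S * U
  have hN (i : n) : ‖N i i‖ ≤ 1 := by
    have := norm_sq_apply_le_re_conjTranspose_mul_self N i i
    rw [conj_unitary_conjTranspose_mul_self, hS, Matrix.mul_one, coe_star_mul_self] at this
    simpa using this
  conv_lhs => rw [← hA.cfc_id, hA.trace_cfc_mul, Complex.re_sum]
  refine Finset.sum_le_sum fun i _ => ?_
  calc ((hA.eigenvalues i : ℂ) * N i i).re = hA.eigenvalues i * (N i i).re := by simp
    _ ≤ |hA.eigenvalues i| * ‖N i i‖ := (le_abs_self _).trans <| by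
        rw [abs_mul]
        exact mul_le_mul_of_nonneg_left (Complex.abs_re_le_norm _) (abs_nonneg _)
    _ ≤ |hA.eigenvalues i| := mul_le_of_le_one_right (abs_nonneg _) (hN i)

end IsHermitian
end Matrix

open Matrix

section

variable {n : Type*} [Fintype n] [DecidableEq n]

lemma matSqrt_eq_cfc {A : Matrix n n ℂ} (hA : A.PosSemidef) : matSqrt A = hA.1.cfc Real.sqrt := by
  rw [matSqrt, dif_pos hA]; rfl

lemma posSemidef_matSqrt {A : Matrix n n ℂ} (hA : A.PosSemidef) : (matSqrt A).PosSemidef := by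
  rw [matSqrt_eq_cfc hA]
  exact hA.1.posSemidef_cfc fun i => Real.sqrt_nonneg _

lemma matSqrt_mul_self {A : Matrix n n ℂ} (hA : A.PosSemidef) : matSqrt A * matSqrt A = A := by
  rw [matSqrt_eq_cfc hA, IsHermitian.cfc_mul_cfc]
  conv_rhs => rw [← hA.1.cfc_id]
  exact hA.1.cfc_congr fun i => Real.mul_self_sqrt (hA.eigenvalues_nonneg i)

lemma norm_trace_le_traceNorm (M : Matrix n n ℂ) : ‖trace M‖ ≤ traceNorm M := by
  have hH : (Mᴴ * M).PosSemidef := posSemidef_conjTranspose_mul_self M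
  set V := hH.1.eigenvectorUnitary
  set N : Matrix n n ℂ := star (V : Matrix n n ℂ) * M * V
  have hN (i : n) : ‖N i i‖ ≤ √(hH.1.eigenvalues i) := by
    refine Real.le_sqrt_of_sq_le ?_
    have := norm_sq_apply_le_re_conjTranspose_mul_self N i i
    rwa [conj_unitary_conjTranspose_mul_self, hH.1.star_eigenvectorUnitary_mul_mul_self_apply,
      Complex.ofReal_re] at this
  calc ‖trace M‖ = ‖∑ i, N i i‖ := by rw [trace_eq_sum_conj_unitary_apply_self V]
    _ ≤ ∑ i, ‖N i i‖ := norm_sum_le _ _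
    _ ≤ ∑ i, √(hH.1.eigenvalues i) := Finset.sum_le_sum fun i _ => hN i
    _ = traceNorm M := by simp [traceNorm, matSqrt_eq_cfc hH, IsHermitian.trace_cfc]

lemma fidelity_eq_traceNorm_sq {ρ σ : Matrix n n ℂ} (hρ : ρ.PosSemidef) (hσ : σ.PosSemidef) :
    fidelity ρ σ = traceNorm (matSqrt ρ * matSqrt σ) ^ 2 := by
  have h : (matSqrt ρ * matSqrt σ)ᴴ * (matSqrt ρ * matSqrt σ) = matSqrt σ * ρ * matSqrt σ := by
    rw [conjTranspose_mul, (posSemidef_matSqrt hρ).1.eq, (posSemidef_matSqrt hσ).1.eq,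
      Matrix.mul_assoc, ← Matrix.mul_assoc (matSqrt ρ), matSqrt_mul_self hρ, Matrix.mul_assoc]
  rw [fidelity, traceNorm, h]

lemma exists_re_trace_sub_mul_sub_le {A B : Matrix n n ℂ} (hA : A.PosSemidef) (hB : B.PosSemidef) :
    ∃ S : Matrix n n ℂ, Sᴴ * S = 1 ∧
      (trace ((A - B) * (A - B))).re ≤ (trace ((A * A - B * B) * S)).re := by
  have hC : (A - B).IsHermitian := hA.1.sub hB.1
  -- a sign function with `sgn 0 = 1`, so that `S` is unitary and `S (A - B) = |A - B|`
  set sgn : ℝ → ℝ := fun t => if t < 0 then -1 else 1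
  set S := hC.cfc sgn
  have hsgn : sgn * sgn = 1 := by ext t; by_cases ht : t < 0 <;> simp [sgn, ht]
  have habs : sgn * id = abs := by
    ext t; by_cases ht : t < 0 <;> simp [sgn, ht, abs_of_neg, abs_of_nonneg, not_lt.mp]
  have hSC : S * (A - B) = hC.cfc abs := by
    have := hC.cfc_mul_cfc sgn id; rwa [hC.cfc_id, habs] at this
  have hCS : (A - B) * S = hC.cfc abs := by
    have := hC.cfc_mul_cfc id sgn; rwa [hC.cfc_id, mul_comm, habs] at this
  have hsum : (A * A - B * B) + (A * A - B * B) = (A - B) * (A + B) + (A + B) * (A - B) := by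
    noncomm_ring
  have htr : trace ((A * A - B * B) * S) = trace (hC.cfc abs * (A + B)) := by
    have h2 : trace (((A * A - B * B) + (A * A - B * B)) * S)
        = trace (hC.cfc abs * (A + B)) + trace (hC.cfc abs * (A + B)) := by
      rw [hsum, Matrix.add_mul, trace_add, trace_mul_cycle, hSC, Matrix.mul_assoc (A + B), hCS,
        trace_mul_comm (A + B)]
    rw [Matrix.add_mul, trace_add] at h2
    linear_combination h2 / 2
  refine ⟨S, ?_, ?_⟩
  · rw [(hC.isHermitian_cfc sgn).eq, hC.cfc_mul_cfc, hsgn, hC.cfc_one]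
  have hCC := hC.trace_cfc_mul_self id
  rw [hC.cfc_id] at hCC
  rw [htr, hCC, hC.trace_cfc_mul, Complex.ofReal_re, Complex.re_sum]
  refine Finset.sum_le_sum fun j _ => ?_
  set W := (hC.eigenvectorUnitary : Matrix n n ℂ)
  set a := (star W * A * W) j j
  set b := (star W * B * W) j j
  have ha : 0 ≤ a.re := (Complex.nonneg_iff.1 (hA.conjTranspose_mul_mul_same W).diag_nonneg).1
  have hb : 0 ≤ b.re := (Complex.nonneg_iff.1 (hB.conjTranspose_mul_mul_same W).diag_nonneg).1
  have hμ : hC.eigenvalues j = a.re - b.re := by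
    have := congrArg Complex.re (hC.star_eigenvectorUnitary_mul_mul_self_apply j)
    rwa [Matrix.mul_sub, Matrix.sub_mul, Matrix.sub_apply, Complex.sub_re, Complex.ofReal_re,
      eq_comm] at this
  have hK : (star W * (A + B) * W) j j = a + b := by
    rw [Matrix.mul_add, Matrix.add_mul, Matrix.add_apply]
  have hle : |a.re - b.re| ≤ a.re + b.re := abs_le.2 ⟨by linarith, by linarith⟩
  rw [hK, id, Complex.re_ofReal_mul, Complex.add_re, hμ, ← abs_mul_abs_self]
  exact mul_le_mul_of_nonneg_left hle (abs_nonneg _)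

lemma one_sub_sqrt_fidelity_le {ρ σ : Matrix n n ℂ} (hρ : IsDensity ρ) (hσ : IsDensity σ)
    (hΔ : (ρ - σ).IsHermitian) :
    1 - √(fidelity ρ σ) ≤ (∑ i, |hΔ.eigenvalues i|) / 2 := by
  obtain ⟨S, hS, hPS⟩ :=
    exists_re_trace_sub_mul_sub_le (posSemidef_matSqrt hρ.1) (posSemidef_matSqrt hσ.1)
  rw [matSqrt_mul_self hρ.1, matSqrt_mul_self hσ.1] at hPS
  have hsq : (trace ((matSqrt ρ - matSqrt σ) * (matSqrt ρ - matSqrt σ))).re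
      = 2 - 2 * (trace (matSqrt ρ * matSqrt σ)).re := by
    rw [sub_mul, mul_sub, mul_sub, matSqrt_mul_self hρ.1, matSqrt_mul_self hσ.1, trace_sub,
      trace_sub, trace_sub, hρ.2, hσ.2, trace_mul_comm (matSqrt σ), Complex.sub_re,
      Complex.sub_re, Complex.sub_re, Complex.one_re]
    ring
  have hAB : (trace (matSqrt ρ * matSqrt σ)).re ≤ √(fidelity ρ σ) := by
    rw [fidelity_eq_traceNorm_sq hρ.1 hσ.1, Real.sqrt_sq_eq_abs]
    exact (Complex.re_le_norm _).trans ((norm_trace_le_traceNorm _).trans (le_abs_self _))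
  linarith [hΔ.re_trace_mul_le_sum_abs_eigenvalues hS]

lemma sum_posPart_eq_half_sum_abs {ι : Type*} [Fintype ι] {x : ι → ℝ} (hx : ∑ i, x i = 0) :
    ∑ i, (x i)⁺ = (∑ i, |x i|) / 2 := by
  have hsub : ∑ i, (x i)⁺ - ∑ i, (x i)⁻ = 0 := by
    rw [← Finset.sum_sub_distrib]; simpa only [posPart_sub_negPart] using hx
  have hadd : ∑ i, (x i)⁺ + ∑ i, (x i)⁻ = ∑ i, |x i| := by
    rw [← Finset.sum_add_distrib]; simp only [posPart_add_negPart]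
  linarith

lemma sum_negPart_eq_half_sum_abs {ι : Type*} [Fintype ι] {x : ι → ℝ} (hx : ∑ i, x i = 0) :
    ∑ i, (x i)⁻ = (∑ i, |x i|) / 2 := by
  simpa [neg_div] using sum_posPart_eq_half_sum_abs (x := -x) (by simpa using hx)

section Helstrom

variable {ρ σ : Matrix n n ℂ} (hΔ : (ρ - σ).IsHermitian)

lemma sum_eigenvalues_sub_eq_zero (htr : trace ρ = trace σ) : ∑ i, hΔ.eigenvalues i = 0 := by
  have := hΔ.trace_eq_sum_eigenvalues
  rw [trace_sub, htr, sub_self] at this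
  simpa using congrArg Complex.re this.symm

lemma half_sum_abs_eigenvalues_le_re_trace_cfc_Ioi_mul (hσ : σ.PosSemidef)
    (htr : trace ρ = trace σ) :
    (∑ i, |hΔ.eigenvalues i|) / 2 ≤ (trace (hΔ.cfc ((Set.Ioi 0).indicator 1) * ρ)).re := by
  have hpos : (trace (hΔ.cfc ((Set.Ioi 0).indicator 1) * (ρ - σ))).re
      = ∑ i, (hΔ.eigenvalues i)⁺ := by
    rw [hΔ.trace_cfc_mul_self, Complex.ofReal_re]
    refine Finset.sum_congr rfl fun i _ => ?_
    by_cases h : 0 < hΔ.eigenvalues i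
    · simp [h, h.le]
    · simp [h, not_lt.mp h]
  rw [Matrix.mul_sub, trace_sub, Complex.sub_re] at hpos
  linarith [sum_posPart_eq_half_sum_abs (sum_eigenvalues_sub_eq_zero hΔ htr),
    hΔ.re_trace_cfc_mul_nonneg (f := (Set.Ioi 0).indicator 1)
      (Set.indicator_nonneg fun _ _ => zero_le_one) hσ]

lemma half_sum_abs_eigenvalues_le_re_trace_cfc_Iio_mul (hρ : ρ.PosSemidef)
    (htr : trace ρ = trace σ) :
    (∑ i, |hΔ.eigenvalues i|) / 2 ≤ (trace (hΔ.cfc ((Set.Iio 0).indicator 1) * σ)).re := by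
  have hneg : (trace (hΔ.cfc ((Set.Iio 0).indicator 1) * (ρ - σ))).re
      = -∑ i, (hΔ.eigenvalues i)⁻ := by
    rw [hΔ.trace_cfc_mul_self, Complex.ofReal_re, ← Finset.sum_neg_distrib]
    refine Finset.sum_congr rfl fun i _ => ?_
    by_cases h : hΔ.eigenvalues i < 0
    · simp [h, h.le]
    · simp [h, not_lt.mp h]
  rw [Matrix.mul_sub, trace_sub, Complex.sub_re] at hneg
  linarith [sum_negPart_eq_half_sum_abs (sum_eigenvalues_sub_eq_zero hΔ htr),
    hΔ.re_trace_cfc_mul_nonneg (f := (Set.Iio 0).indicator 1)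
      (Set.indicator_nonneg fun _ _ => zero_le_one) hρ]

end Helstrom

section Bipartite

variable {X Y : Type*} [Fintype X] [Fintype Y]

lemma redX_eq_mul_conjTranspose (ψ : X × Y → ℂ) :
    redX ψ = of (Function.curry ψ) * (of (Function.curry ψ))ᴴ := by
  ext x x'
  simp [redX, mul_apply]

lemma trace_mul_conjTranspose_self (N : Matrix X Y ℂ) :
    trace (N * Nᴴ) = ((∑ x, ∑ y, ‖N x y‖ ^ 2 : ℝ) : ℂ) := by
  simp [trace, mul_apply, Complex.mul_conj, Complex.normSq_eq_norm_sq]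

lemma isDensity_redX [DecidableEq X] {ψ : X × Y → ℂ} (hψ : ∑ p, ‖ψ p‖ ^ 2 = 1) :
    IsDensity (redX ψ) := by
  rw [redX_eq_mul_conjTranspose]
  refine ⟨posSemidef_self_mul_conjTranspose _, ?_⟩
  rw [trace_mul_conjTranspose_self]
  simp [← Fintype.sum_prod_type', hψ]

lemma kroneckerMap_one_mulVec_apply [DecidableEq Y] (P : Matrix X X ℂ) (ψ : X × Y → ℂ)
    (x : X) (y : Y) :
    ((P ⊗ₖ (1 : Matrix Y Y ℂ)) *ᵥ ψ) (x, y) = (P * of (Function.curry ψ)) x y := by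
  simp [mulVec, dotProduct, mul_apply, Fintype.sum_prod_type, one_apply]

lemma sum_norm_sq_kroneckerMap_one_mulVec [DecidableEq X] [DecidableEq Y] {P : Matrix X X ℂ}
    (hP : Pᴴ * P = P) (ψ : X × Y → ℂ) :
    ∑ p, ‖((P ⊗ₖ (1 : Matrix Y Y ℂ)) *ᵥ ψ) p‖ ^ 2 = (trace (P * redX ψ)).re := by
  have h : trace (P * redX ψ)
      = trace ((P * of (Function.curry ψ)) * (P * of (Function.curry ψ))ᴴ) := by
    conv_rhs => rw [conjTranspose_mul, ← Matrix.mul_assoc, trace_mul_comm, ← Matrix.mul_assoc,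
      ← Matrix.mul_assoc, hP, Matrix.mul_assoc, ← redX_eq_mul_conjTranspose]
  rw [h, trace_mul_conjTranspose_self, Complex.ofReal_re, Fintype.sum_prod_type]
  simp only [kroneckerMap_one_mulVec_apply]

end Bipartite

end

/-- if |ψ₀⟩, |ψ₁⟩ are pure states on (X,Y) whose reduced states on
X have fidelity ε, there is a projective measurement {P0, P1, I−P0−P1} on X
with ‖(Π_b ⊗ I)|ψ_b⟩‖² ≥ 1 − √(2ε) for each b. -/
theorem distinguishing_measurement_from_fidelity
    {X Y : Type*} [Fintype X] [DecidableEq X] [Fintype Y] [DecidableEq Y]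
    (ψ₀ ψ₁ : X × Y → ℂ)
    (h₀ : ∑ p, ‖ψ₀ p‖ ^ 2 = 1) (h₁ : ∑ p, ‖ψ₁ p‖ ^ 2 = 1)
    (ε : ℝ) (hε : fidelity (redX ψ₀) (redX ψ₁) = ε) :
    ∃ P0 P1 : Matrix X X ℂ,
      P0.IsHermitian ∧ P0 * P0 = P0 ∧
      P1.IsHermitian ∧ P1 * P1 = P1 ∧
      P0 * P1 = 0 ∧
      (∑ p, ‖((P0 ⊗ₖ (1 : Matrix Y Y ℂ)).mulVec ψ₀) p‖ ^ 2 ≥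
        1 - Real.sqrt (2 * ε)) ∧
      (∑ p, ‖((P1 ⊗ₖ (1 : Matrix Y Y ℂ)).mulVec ψ₁) p‖ ^ 2 ≥
        1 - Real.sqrt (2 * ε)) := by
  have hρ₀ := isDensity_redX h₀
  have hρ₁ := isDensity_redX h₁
  have hΔ : (redX ψ₀ - redX ψ₁).IsHermitian := hρ₀.1.1.sub hρ₁.1.1
  have htr : trace (redX ψ₀) = trace (redX ψ₁) := hρ₀.2.trans hρ₁.2.symm
  have hF : 1 - √(2 * ε) ≤ (∑ i, |hΔ.eigenvalues i|) / 2 := by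
    have hε0 : 0 ≤ ε := hε ▸ sq_nonneg _
    have := one_sub_sqrt_fidelity_le hρ₀ hρ₁ hΔ
    rw [hε] at this
    linarith [Real.sqrt_le_sqrt (by linarith : ε ≤ 2 * ε)]
  set P0 := hΔ.cfc ((Set.Ioi 0).indicator 1)
  set P1 := hΔ.cfc ((Set.Iio 0).indicator 1)
  have hP0 : P0ᴴ * P0 = P0 := by rw [(hΔ.isHermitian_cfc _).eq, hΔ.cfc_indicator_mul_self]
  have hP1 : P1ᴴ * P1 = P1 := by rw [(hΔ.isHermitian_cfc _).eq, hΔ.cfc_indicator_mul_self]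
  refine ⟨P0, P1, hΔ.isHermitian_cfc _, hΔ.cfc_indicator_mul_self _, hΔ.isHermitian_cfc _,
    hΔ.cfc_indicator_mul_self _, hΔ.cfc_indicator_mul_cfc_indicator Set.Ioi_disjoint_Iio_same,
    ?_, ?_⟩
  · rw [ge_iff_le, sum_norm_sq_kroneckerMap_one_mulVec hP0]
    exact hF.trans (half_sum_abs_eigenvalues_le_re_trace_cfc_Ioi_mul hΔ hρ₁.1 htr)
  · rw [ge_iff_le, sum_norm_sq_kroneckerMap_one_mulVec hP1]
    exact hF.trans (half_sum_abs_eigenvalues_le_re_trace_cfc_Iio_mul hΔ hρ₀.1 htr)
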